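/- Let d ≥ 1, let p ≥ 1 be a real number, let θ ∈ (0, 1/2], and let M be a real symmetric positive definite d×d matrix satisfying m·I ≼ M ≼ m̄·I for constants 0 < m ≤ m̄. Then for every real d×d matrix J with det J > 0, θ·√(det M)·(tr(J M⁻¹ Jᵀ))^{dp/2} + (1 − 2θ)·d^{dp/2}·√(det M)·(det J / √(det M))^p ≥ θ · m^{d/2} · m̄^{−dp/2} · ‖J‖_F^{dp}. (Coercivity of the integrand of the existing meshing functional.) -/

import Mathlib

/-!
Since `M ≼ m̄ I`, Cauchy–Schwarz for the form of `M` gives `M⁻¹ ≽ m̄⁻¹ I`, so summing over the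
rows of `J` yields `tr (J M⁻¹ Jᵀ) ≥ ‖J‖_F² / m̄`. Since `M ≽ m I`, every eigenvalue of `M` is at
least `m`, so `√(det M) ≥ m^{d/2}`. Raising the trace bound to the power `dp/2` bounds the first
term from below, and the second term is nonnegative because `θ ≤ 1/2` and `det J > 0`.
-/

open Matrix

noncomputable def frob {d : ℕ} (A : Matrix (Fin d) (Fin d) ℝ) : ℝ :=
  Real.sqrt (∑ i, ∑ j, (A i j) ^ 2)

namespace Matrix

variable {n : Type*} [Fintype n]

theorem PosSemidef.dotProduct_mulVec_sq_le {M : Matrix n n ℝ} (hM : M.PosSemidef)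
    (x y : n → ℝ) : (x ⬝ᵥ (M *ᵥ y)) ^ 2 ≤ (x ⬝ᵥ (M *ᵥ x)) * (y ⬝ᵥ (M *ᵥ y)) := by
  have hsymm : y ⬝ᵥ (M *ᵥ x) = x ⬝ᵥ (M *ᵥ y) := by
    rw [dotProduct_mulVec, ← mulVec_transpose, ← conjTranspose_eq_transpose_of_trivial,
      hM.isHermitian.eq, dotProduct_comm]
  have hquad : ∀ t : ℝ,
      0 ≤ (y ⬝ᵥ (M *ᵥ y)) * (t * t) + 2 * (x ⬝ᵥ (M *ᵥ y)) * t + x ⬝ᵥ (M *ᵥ x) := by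
    intro t
    have hnonneg := hM.dotProduct_mulVec_nonneg (x + t • y)
    simp only [star_trivial, mulVec_add, mulVec_smul, add_dotProduct, dotProduct_add,
      smul_dotProduct, dotProduct_smul, smul_eq_mul, hsymm] at hnonneg
    linarith
  have hdiscrim := discrim_le_zero hquad
  rw [discrim] at hdiscrim
  linarith

theorem PosDef.dotProduct_le_mul_dotProduct_inv_mulVec [DecidableEq n] {M : Matrix n n ℝ}
    (hM : M.PosDef) {c : ℝ} (hc : ∀ x, x ⬝ᵥ (M *ᵥ x) ≤ c * (x ⬝ᵥ x)) (x : n → ℝ) :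
    x ⬝ᵥ x ≤ c * (x ⬝ᵥ (M⁻¹ *ᵥ x)) := by
  rcases (show 0 ≤ x ⬝ᵥ x by simpa using dotProduct_star_self_nonneg x).eq_or_lt with hx | hx
  · obtain rfl : x = 0 := dotProduct_self_eq_zero.mp hx.symm
    simp
  have hMy : M *ᵥ (M⁻¹ *ᵥ x) = x := by
    rw [mulVec_mulVec, mul_nonsing_inv _ hM.det_pos.ne'.isUnit, one_mulVec]
  have hcs := hM.posSemidef.dotProduct_mulVec_sq_le x (M⁻¹ *ᵥ x)
  rw [hMy, dotProduct_comm (M⁻¹ *ᵥ x)] at hcs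
  have hinv : 0 ≤ x ⬝ᵥ (M⁻¹ *ᵥ x) := by
    simpa using hM.posSemidef.inv.dotProduct_mulVec_nonneg x
  refine le_of_mul_le_mul_left ?_ hx
  calc x ⬝ᵥ x * x ⬝ᵥ x ≤ x ⬝ᵥ (M *ᵥ x) * x ⬝ᵥ (M⁻¹ *ᵥ x) := by rw [← sq]; exact hcs
    _ ≤ c * (x ⬝ᵥ x) * x ⬝ᵥ (M⁻¹ *ᵥ x) := by gcongr; exact hc x
    _ = x ⬝ᵥ x * (c * x ⬝ᵥ (M⁻¹ *ᵥ x)) := by ring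

theorem trace_mul_mul_transpose (J A : Matrix n n ℝ) :
    (J * A * Jᵀ).trace = ∑ i, J i ⬝ᵥ (A *ᵥ J i) := by
  simp only [trace, diag_apply, mul_mul_apply, transpose_transpose]

theorem PosDef.pow_card_le_det [DecidableEq n] {M : Matrix n n ℝ} (hM : M.PosDef) {m : ℝ}
    (hm : 0 ≤ m) (hlo : ∀ x, m * (x ⬝ᵥ x) ≤ x ⬝ᵥ (M *ᵥ x)) :
    m ^ Fintype.card n ≤ M.det := by
  have hH := hM.isHermitian
  have hev : ∀ i, m ≤ hH.eigenvalues i := by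
    intro i
    have hunit : ⇑(hH.eigenvectorBasis i) ⬝ᵥ ⇑(hH.eigenvectorBasis i) = 1 := by
      have := real_inner_self_eq_norm_sq (hH.eigenvectorBasis i)
      rw [hH.eigenvectorBasis.orthonormal.1 i, EuclideanSpace.inner_eq_star_dotProduct] at this
      simpa using this
    simpa [hH.eigenvalues_eq i, hunit] using hlo (hH.eigenvectorBasis i)
  calc m ^ Fintype.card n = ∏ _i : n, m := by simp
    _ ≤ ∏ i, hH.eigenvalues i := Finset.prod_le_prod (fun _ _ => hm) fun i _ => hev i
    _ = M.det := by simp [hH.det_eq_prod_eigenvalues]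

end Matrix

theorem frob_sq {d : ℕ} (A : Matrix (Fin d) (Fin d) ℝ) : frob A ^ 2 = ∑ i, A i ⬝ᵥ A i := by
  rw [frob, Real.sq_sqrt (by positivity)]
  simp only [dotProduct, sq]

theorem frob_sq_le_mul_trace_mul_inv_mul_transpose {d : ℕ} {M : Matrix (Fin d) (Fin d) ℝ}
    (hM : M.PosDef) {c : ℝ} (hc : ∀ x, x ⬝ᵥ (M *ᵥ x) ≤ c * (x ⬝ᵥ x))
    (J : Matrix (Fin d) (Fin d) ℝ) : frob J ^ 2 ≤ c * (J * M⁻¹ * Jᵀ).trace := by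
  rw [frob_sq, trace_mul_mul_transpose, Finset.mul_sum]
  exact Finset.sum_le_sum fun i _ => hM.dotProduct_le_mul_dotProduct_inv_mulVec hc (J i)

theorem stmt11_general (d : ℕ) (p : ℝ) (hp : 1 ≤ p)
    (θ : ℝ) (hθ0 : 0 < θ) (hθ : θ ≤ 1 / 2)
    (M : Matrix (Fin d) (Fin d) ℝ) (hM : M.PosDef)
    (m mbar : ℝ) (hm : 0 < m) (hmm : m ≤ mbar)
    (hlo : ∀ x : Fin d → ℝ, m * (x ⬝ᵥ x) ≤ x ⬝ᵥ (M *ᵥ x))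
    (hhi : ∀ x : Fin d → ℝ, x ⬝ᵥ (M *ᵥ x) ≤ mbar * (x ⬝ᵥ x))
    (J : Matrix (Fin d) (Fin d) ℝ) (hJ : 0 < J.det) :
    θ * Real.sqrt M.det * (J * M⁻¹ * Jᵀ).trace ^ ((d : ℝ) * p / 2)
        + (1 - 2 * θ) * (d : ℝ) ^ ((d : ℝ) * p / 2) * Real.sqrt M.det *
            (J.det / Real.sqrt M.det) ^ p ≥
      θ * m ^ ((d : ℝ) / 2) * mbar ^ (-((d : ℝ) * p) / 2) * frob J ^ ((d : ℝ) * p) := by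
  have hmbar : 0 < mbar := hm.trans_le hmm
  have hexp : 0 ≤ (d : ℝ) * p / 2 := by positivity
  have hfrob : 0 ≤ frob J := Real.sqrt_nonneg _
  have htrace : frob J ^ 2 / mbar ≤ (J * M⁻¹ * Jᵀ).trace := by
    rw [div_le_iff₀' hmbar]
    exact frob_sq_le_mul_trace_mul_inv_mul_transpose hM hhi J
  have hdet : m ^ ((d : ℝ) / 2) ≤ Real.sqrt M.det := by
    rw [Real.sqrt_eq_rpow, div_eq_mul_one_div, Real.rpow_mul hm.le, Real.rpow_natCast]
    gcongr
    simpa using hM.pow_card_le_det hm.le hlo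
  have hsecond : 0 ≤ (1 - 2 * θ) * (d : ℝ) ^ ((d : ℝ) * p / 2) * Real.sqrt M.det *
      (J.det / Real.sqrt M.det) ^ p := by
    have hcoef : 0 ≤ 1 - 2 * θ := by linarith
    positivity
  rw [ge_iff_le]
  calc θ * m ^ ((d : ℝ) / 2) * mbar ^ (-((d : ℝ) * p) / 2) * frob J ^ ((d : ℝ) * p)
      = θ * m ^ ((d : ℝ) / 2) * (frob J ^ 2 / mbar) ^ ((d : ℝ) * p / 2) := by
        rw [Real.div_rpow (by positivity) hmbar.le, ← Real.rpow_natCast,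
          ← Real.rpow_mul hfrob, neg_div, Real.rpow_neg hmbar.le]
        ring_nf
    _ ≤ θ * Real.sqrt M.det * (J * M⁻¹ * Jᵀ).trace ^ ((d : ℝ) * p / 2) := by gcongr
    _ ≤ _ := le_add_of_nonneg_right hsecond

/-- Coercivity of the integrand of the existing meshing functional of Huang:
for `p ≥ 1`, `θ ∈ (0, 1/2]`, and `m I ≼ M ≼ m̄ I`,
`θ √(det M) (tr(J M⁻¹ Jᵀ))^{dp/2} + (1−2θ) d^{dp/2} √(det M) (det J/√(det M))^p
  ≥ θ m^{d/2} m̄^{−dp/2} ‖J‖_F^{dp}`. -/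
theorem stmt11 (d : ℕ) (hd : 1 ≤ d) (p : ℝ) (hp : 1 ≤ p)
    (θ : ℝ) (hθ0 : 0 < θ) (hθ : θ ≤ 1 / 2)
    (M : Matrix (Fin d) (Fin d) ℝ) (hM : M.PosDef)
    (m mbar : ℝ) (hm : 0 < m) (hmm : m ≤ mbar)
    (hlo : ∀ x : Fin d → ℝ, m * (x ⬝ᵥ x) ≤ x ⬝ᵥ (M *ᵥ x))
    (hhi : ∀ x : Fin d → ℝ, x ⬝ᵥ (M *ᵥ x) ≤ mbar * (x ⬝ᵥ x))
    (J : Matrix (Fin d) (Fin d) ℝ) (hJ : 0 < J.det) :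
    θ * Real.sqrt M.det * (J * M⁻¹ * Jᵀ).trace ^ ((d : ℝ) * p / 2)
        + (1 - 2 * θ) * (d : ℝ) ^ ((d : ℝ) * p / 2) * Real.sqrt M.det *
            (J.det / Real.sqrt M.det) ^ p ≥
      θ * m ^ ((d : ℝ) / 2) * mbar ^ (-((d : ℝ) * p) / 2) * frob J ^ ((d : ℝ) * p) :=
  stmt11_general d p hp θ hθ0 hθ M hM m mbar hm hmm hlo hhi J hJ
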